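/- Fix ξ ∈ [0, π/2] and define for θ ∈ [0, π]: h_±(ξ,θ) := sin²θ·(3 + sin ξ)² + (5·cos ξ ± 4·cos θ)², and q(ξ,θ) := sqrt(h₊) + sqrt(h₋). Then q(ξ,θ) ≤ (5/2)·sqrt 22 for all ξ ∈ [0, π/2] and θ ∈ [0, π], with equality when θ = π/2 and ξ = arcsin(1/8). -/

import Mathlib

noncomputable def hpm (ε ξ θ : ℝ) : ℝ :=
  Real.sin θ^2 * (3 + Real.sin ξ)^2 + (5*Real.cos ξ + ε*(4*Real.cos θ))^2

noncomputable def q (ξ θ : ℝ) : ℝ := Real.sqrt (hpm 1 ξ θ) + Real.sqrt (hpm (-1) ξ θ)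

/-!
Write `a = hpm 1 ξ θ` and `b = hpm (-1) ξ θ`. Squaring twice, `√a + √b ≤ √M` amounts to
`a + b ≤ M` together with `2M(a + b) ≤ M² + (a - b)²`. For `M = 275/2` the second condition,
in terms of `s = sin ξ` and `u = cos θ`, reduces to
`48 (s - 1/8)² + 6 u² (39 s + 17)(1 - s) / 11 ≥ 0`, which holds for `s ∈ [0, 1]`
and vanishes exactly at `u = 0`, `s = 1/8`. Finally `√(275/2) = (5/2)√22`.
-/

open Real

theorem Real.sqrt_add_sqrt_le_sqrt {a b M : ℝ} (ha : 0 ≤ a) (hb : 0 ≤ b) (hsum : a + b ≤ M)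
    (h : 2 * M * (a + b) ≤ M ^ 2 + (a - b) ^ 2) : √a + √b ≤ √M := by
  have hprod : 2 * √(a * b) ≤ M - (a + b) := by
    rw [← sqrt_sq (by norm_num : (0 : ℝ) ≤ 2), ← sqrt_mul (by norm_num)]
    exact sqrt_le_iff.mpr ⟨by linarith, by nlinarith⟩
  rw [le_sqrt (by positivity) (by linarith), add_sq, sq_sqrt ha, sq_sqrt hb,
    mul_assoc, ← sqrt_mul ha]
  linarith

lemma hpm_add_hpm_neg (ξ θ : ℝ) :
    hpm 1 ξ θ + hpm (-1) ξ θ =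
      2 * (sin θ ^ 2 * (3 + sin ξ) ^ 2 + 25 * cos ξ ^ 2 + 16 * cos θ ^ 2) := by
  unfold hpm; ring

lemma hpm_sub_hpm_neg (ξ θ : ℝ) : hpm 1 ξ θ - hpm (-1) ξ θ = 80 * cos ξ * cos θ := by
  unfold hpm; ring

lemma hpm_add_hpm_neg_le (ξ θ : ℝ) : hpm 1 ξ θ + hpm (-1) ξ θ ≤ 275 / 2 := by
  have hs : (3 + sin ξ) ^ 2 ≤ 16 := by nlinarith [sin_le_one ξ, neg_one_le_sin ξ]
  rw [hpm_add_hpm_neg]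
  nlinarith [mul_le_mul_of_nonneg_left hs (sq_nonneg (sin θ)), sin_sq_add_cos_sq ξ,
    sin_sq_add_cos_sq θ]

lemma mul_hpm_add_hpm_neg_le {ξ : ℝ} (hξ : 0 ≤ sin ξ) (θ : ℝ) :
    2 * (275 / 2) * (hpm 1 ξ θ + hpm (-1) ξ θ) ≤
      (275 / 2) ^ 2 + (hpm 1 ξ θ - hpm (-1) ξ θ) ^ 2 := by
  rw [hpm_add_hpm_neg, hpm_sub_hpm_neg]
  have hlin : 0 ≤ (39 * sin ξ + 17) * (1 - sin ξ) :=
    mul_nonneg (by positivity) (sub_nonneg.mpr (sin_le_one ξ))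
  nlinarith [sq_nonneg (sin ξ - 1 / 8), sin_sq_add_cos_sq ξ, sin_sq_add_cos_sq θ,
    mul_nonneg (sq_nonneg (cos θ)) hlin]

lemma q_le_sqrt {ξ : ℝ} (hξ : 0 ≤ sin ξ) (θ : ℝ) : q ξ θ ≤ √(275 / 2) :=
  sqrt_add_sqrt_le_sqrt (by unfold hpm; positivity) (by unfold hpm; positivity)
    (hpm_add_hpm_neg_le ξ θ) (mul_hpm_add_hpm_neg_le hξ θ)

lemma q_pi_div_two (ξ : ℝ) : q ξ (π / 2) = 2 * √((3 + sin ξ) ^ 2 + 25 * cos ξ ^ 2) := by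
  simp only [q, hpm, sin_pi_div_two, cos_pi_div_two]
  ring_nf

lemma sqrt_275_div_two : √(275 / 2) = 5 / 2 * √22 := by
  rw [show (275 / 2 : ℝ) = (5 / 2) ^ 2 * 22 by norm_num, sqrt_mul (by positivity),
    sqrt_sq (by norm_num)]

theorem stmt6 :
    (∀ ξ θ : ℝ, 0 ≤ ξ → ξ ≤ Real.pi/2 → 0 ≤ θ → θ ≤ Real.pi →
      q ξ θ ≤ (5/2)*Real.sqrt 22) ∧
    q (Real.arcsin (1/8)) (Real.pi/2) = (5/2)*Real.sqrt 22 := by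
  rw [← sqrt_275_div_two]
  refine ⟨fun ξ θ hξ₀ hξ₁ _ _ ↦
    q_le_sqrt (sin_nonneg_of_nonneg_of_le_pi hξ₀ (by linarith [pi_pos])) θ, ?_⟩
  have hcos : cos (arcsin (1 / 8)) ^ 2 = 63 / 64 := by
    rw [cos_arcsin, sq_sqrt (by norm_num)]; norm_num
  rw [q_pi_div_two, sin_arcsin (by norm_num) (by norm_num), hcos,
    ← sqrt_sq (by norm_num : (0 : ℝ) ≤ 2), ← sqrt_mul (by norm_num)]
  norm_num
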